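/- arXiv:1605.07162 — 2 statements merged into one kernel-verified Lean document; each statement's English description precedes it below -/
import Mathlib

section
/- Let M be a matroid on ground set S with injective weight function μ, and let I be a basis of M. Then I is the maximum-weight basis of M if and only if for every real number r, the set I^{≥r} = {x ∈ I : μ(x) ≥ r} is a basis of the restriction of M to S^{≥r} = {x ∈ S : μ(x) ≥ r}. -/
open Matroid Set

variable {α : Type*}

/-- The `ℕ∞`-valued rank of a set `X` in a matroid `M`:
the supremum of the sizes of independent subsets of `X`. -/
noncomputable def Matroid.eRank' (M : Matroid α) (X : Set α) : ℕ∞ :=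
  ⨆ I ∈ {I | M.Indep I ∧ I ⊆ X}, I.encard

/-- A set `A` *blocks* an element `e` if adding `e` to `A` does not increase the rank. -/
def Matroid.Blocks (M : Matroid α) (A : Set α) (e : α) : Prop :=
  M.eRank' (insert e A) = M.eRank' A

/-- The total weight of a set of elements. -/
noncomputable def wt (μ : α → ℝ) (I : Set α) : ℝ := ∑ᶠ e ∈ I, μ e

/-- `I` is a maximum-weight base of `M` with respect to the weight function `μ`. -/
def IsMaxWeightBase (M : Matroid α) (μ : α → ℝ) (I : Set α) : Prop :=
  M.IsBase I ∧ ∀ J, M.IsBase J → wt μ J ≤ wt μ I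

/-- The modified cost function `μ_{I,ε}` adding `ε` to the weight of each element of `I`. -/
noncomputable def modCost (μ : α → ℝ) (I : Set α) (ε : ℝ) : α → ℝ :=
  fun e => μ e + I.indicator (fun _ => ε) e

/-- `I` is an `ε`-optimal base of `M` w.r.t. `μ`:
it is a maximum-weight base for the modified cost `μ_{I,ε}`. -/
def EpsOptimal (M : Matroid α) (μ : α → ℝ) (ε : ℝ) (I : Set α) : Prop :=
  IsMaxWeightBase M (modCost μ I ε) I

/-- Contraction of a matroid, defined by duality: `M ／ C = (M✶ ↾ (M.E \ C))✶`. -/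
noncomputable def Matroid.contract' (M : Matroid α) (C : Set α) : Matroid α :=
  (M✶ ↾ (M.E \ C))✶

/-- The weight of a maximum-weight base of `M` with respect to `μ`. -/
noncomputable def OPTval (M : Matroid α) (μ : α → ℝ) : ℝ :=
  sSup ((fun B => wt μ B) '' {B | M.IsBase B})

/-! If `I` is a maximum-weight base, every element `f` of the fundamental circuit of an
`e ∉ I` satisfies `μ e ≤ μ f`, since exchanging `f` for `e` gives another base. So if
`μ e ≥ r`, that circuit lies in `insert e I^{≥r}`, and `I^{≥r}` cannot be extended inside
`S^{≥r}`. Conversely, if each `I^{≥r}` is a basis of `S^{≥r}`, then no base `J` has more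
elements of weight `≥ r` than `I`; as `|J| = |I|`, matching the elements of `J` and `I` in
decreasing order of weight gives `wt μ J ≤ wt μ I`. -/

open Finset in
theorem Finset.sum_le_sum_of_card_filter_le {ι β : Type*} [AddCommMonoid β] [LinearOrder β]
    [IsOrderedAddMonoid β] [DecidableEq ι] {f : ι → β} {s t : Finset ι} (hcard : #s ≤ #t)
    (h : ∀ r, #{x ∈ t | r ≤ f x} ≤ #{x ∈ s | r ≤ f x}) :
    ∑ x ∈ t, f x ≤ ∑ x ∈ s, f x := by
  induction t using Finset.induction_on_max_value f generalizing s with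
  | empty => simp_all
  | insert b t hbt hmax ih =>
    obtain ⟨a, has, hba⟩ : ∃ a ∈ s, f b ≤ f a := by
      have := (card_pos.2 ⟨b, by simp⟩).trans_le (h (f b))
      simpa [Finset.Nonempty] using this
    have hrest : ∀ r, #{x ∈ t | r ≤ f x} ≤ #{x ∈ s.erase a | r ≤ f x} := by
      intro r
      by_cases hr : r ≤ f b
      · have := h r
        rw [filter_insert, if_pos hr, card_insert_of_notMem (by simp [hbt]),
          ← insert_erase (mem_filter.2 ⟨has, hr.trans hba⟩), card_insert_of_notMem (by simp),
          ← filter_erase] at this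
        omega
      · rw [filter_false_of_mem fun x hx => not_le.2 ((hmax x hx).trans_lt (not_le.1 hr))]
        simp
    calc ∑ x ∈ insert b t, f x = f b + ∑ x ∈ t, f x := sum_insert hbt
      _ ≤ f a + ∑ x ∈ s.erase a, f x := by
        refine add_le_add hba (ih ?_ hrest)
        rw [card_insert_of_notMem hbt] at hcard
        rw [card_erase_of_mem has]
        omega
      _ = ∑ x ∈ s, f x := add_sum_erase s f has

section

variable {M : Matroid α} {μ : α → ℝ} {I : Set α} {e f : α}

lemma wt_insert_sdiff_singleton (hI : I.Finite) (he : e ∉ I) (hf : f ∈ I) :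
    wt μ (insert e I \ {f}) + μ f = wt μ I + μ e := by
  have hef : e ≠ f := ne_of_mem_of_not_mem hf he |>.symm
  rw [wt, wt, ← insert_sdiff_singleton_comm hef,
    finsum_mem_insert _ (fun h => he h.1) hI.sdiff]
  conv_rhs =>
    rw [← insert_sdiff_self_of_mem hf,
      finsum_mem_insert _ (fun h : f ∈ I \ {f} => h.2 rfl) hI.sdiff]
  ring

lemma IsMaxWeightBase.le_of_mem_fundCircuit [M.RankFinite] (h : IsMaxWeightBase M μ I)
    (heE : e ∈ M.E) (heI : e ∉ I) (hf : f ∈ M.fundCircuit e I) : μ e ≤ μ f := by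
  obtain rfl | hfe := eq_or_ne f e
  · rfl
  have hfI : f ∈ I := (M.fundCircuit_subset_insert e I hf).resolve_left hfe
  have hexch : M.IsBase (insert e I \ {f}) :=
    h.1.exchange_isBase_of_indep' hfI heI <|
      (h.1.indep.mem_fundCircuit_iff (by rwa [h.1.closure_eq]) heI).1 hf
  linarith [h.2 _ hexch, wt_insert_sdiff_singleton (μ := μ) h.1.finite heI hfI]

lemma IsMaxWeightBase.isBasis_threshold [M.RankFinite] (h : IsMaxWeightBase M μ I) (r : ℝ) :
    M.IsBasis {x ∈ I | r ≤ μ x} {x ∈ M.E | r ≤ μ x} := by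
  refine (h.1.indep.subset (sep_subset _ _)).isBasis_of_forall_insert
    (fun x hx => ⟨h.1.subset_ground hx.1, hx.2⟩) ?_
  rintro e ⟨⟨heE, her⟩, heJ⟩
  have heI : e ∉ I := fun heI => heJ ⟨heI, her⟩
  refine (h.1.fundCircuit_isCircuit heE heI).dep.superset (fun x hx => ?_)
    (insert_subset heE fun x hx => h.1.subset_ground hx.1)
  obtain rfl | hxI := M.fundCircuit_subset_insert e I hx
  · exact mem_insert _ _
  · exact Or.inr ⟨hxI, her.trans (h.le_of_mem_fundCircuit heE heI hx)⟩

lemma Matroid.IsBase.isMaxWeightBase_of_forall_isBasis [M.RankFinite] (hI : M.IsBase I)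
    (h : ∀ r : ℝ, M.IsBasis {x ∈ I | r ≤ μ x} {x ∈ M.E | r ≤ μ x}) :
    IsMaxWeightBase M μ I := by
  classical
  refine ⟨hI, fun J hJ => ?_⟩
  rw [wt, wt, finsum_mem_eq_finite_toFinset_sum _ hJ.finite,
    finsum_mem_eq_finite_toFinset_sum _ hI.finite]
  refine Finset.sum_le_sum_of_card_filter_le ?_ fun r => ?_
  · rw [← ncard_eq_toFinset_card _ hI.finite, ← ncard_eq_toFinset_card _ hJ.finite,
      hI.ncard_eq_ncard_of_isBase hJ]
  · have hle : {x ∈ J | r ≤ μ x}.encard ≤ {x ∈ I | r ≤ μ x}.encard := by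
      rw [(h r).encard_eq_eRk]
      exact (hJ.indep.subset (sep_subset _ _)).encard_le_eRk_of_subset
        fun x hx => ⟨hJ.subset_ground hx.1, hx.2⟩
    rw [← Nat.cast_le (α := ℕ∞), ← encard_coe_eq_coe_finsetCard,
      ← encard_coe_eq_coe_finsetCard]
    simpa using hle

end

theorem isMaxWeightBase_iff_basis_threshold_general (M : Matroid α) [M.Finite] (μ : α → ℝ)
    (I : Set α) (hI : M.IsBase I) :
    IsMaxWeightBase M μ I ↔ ∀ r : ℝ, M.IsBasis {x ∈ I | r ≤ μ x} {x ∈ M.E | r ≤ μ x} :=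
  ⟨IsMaxWeightBase.isBasis_threshold, hI.isMaxWeightBase_of_forall_isBasis⟩

/-- A base `I` is the maximum-weight base iff for every real `r`, the set
`I^{≥r}` is a basis of the restriction of `M` to `S^{≥r}`. -/
theorem isMaxWeightBase_iff_basis_threshold (M : Matroid α) [M.Finite] (μ : α → ℝ)
    (hinj : Set.InjOn μ M.E) (hpos : ∀ e ∈ M.E, 0 < μ e)
    (I : Set α) (hI : M.IsBase I) :
    IsMaxWeightBase M μ I ↔ ∀ r : ℝ, M.IsBasis {x ∈ I | r ≤ μ x} {x ∈ M.E | r ≤ μ x} :=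
  isMaxWeightBase_iff_basis_threshold_general M μ I hI
end

section
/- If A is an ε-approximate subset of B witnessed by an independent set I ⊆ A that is ε-optimal for M|B, then for every e ∈ B \ A, both I^{≥ μ(e) − ε} and A^{≥ μ(e) − ε} block e. -/
open Matroid Set

variable {α : Type*}

/-!
If `e ∉ I` were not spanned by `J = I^{≥ μ e - ε}`, the fundamental circuit of `e` in the
base `I` would contain some `f ∈ I \ J`, and `I - f + e` would be a base; since
`μ f < μ e - ε`, it would beat `I` under the modified cost `μ_{I,ε}`. So `e` lies in the
closure of `J`, hence also of the larger `A^{≥ μ e - ε}`, and an element of the closure of a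
set is blocked by it.
-/

namespace Matroid

variable {M : Matroid α} {I J X : Set α} {e : α}

lemma eRank'_eq_eRk (M : Matroid α) (X : Set α) : M.eRank' X = M.eRk X := by
  refine le_antisymm (iSup₂_le fun I hI ↦ hI.1.encard_le_eRk_of_subset hI.2) ?_
  obtain ⟨I, hI⟩ := M.exists_isBasis' X
  rw [← hI.encard_eq_eRk]
  exact le_iSup₂_of_le I ⟨hI.indep, hI.subset⟩ le_rfl

lemma blocks_iff_eRk : M.Blocks X e ↔ M.eRk (insert e X) = M.eRk X := by
  rw [Blocks, eRank'_eq_eRk, eRank'_eq_eRk]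

lemma blocks_of_mem_closure (he : e ∈ M.closure X) : M.Blocks X e := by
  rw [blocks_iff_eRk, ← eRk_insert_closure_eq, insert_eq_of_mem he, eRk_closure_eq]

lemma IsBase.exists_exchange_of_notMem_closure (hI : M.IsBase I)
    (he : e ∈ M.E \ I) (heJ : e ∉ M.closure J) :
    ∃ f ∈ I \ J, M.IsBase (insert e (I \ {f})) := by
  have hecl : e ∈ M.closure I := by rw [hI.closure_eq]; exact he.1
  have hC := hI.indep.fundCircuit_isCircuit hecl he.2
  obtain ⟨f, hfC, hfJ⟩ : ∃ f ∈ M.fundCircuit e I, f ∉ insert e J := by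
    by_contra! hCJ
    refine heJ (M.closure_subset_closure ?_ (hC.mem_closure_sdiff_singleton_of_mem
      (M.mem_fundCircuit e I)))
    exact fun x hx ↦ (hCJ x hx.1).resolve_left hx.2
  have hfe : f ≠ e := fun h ↦ hfJ (h ▸ mem_insert e J)
  have hfI : f ∈ I := ((M.fundCircuit_subset_insert e I) hfC).resolve_left hfe
  have hindep := (hI.indep.mem_fundCircuit_iff hecl he.2).1 hfC
  rw [← insert_sdiff_singleton_comm hfe.symm] at hindep
  exact ⟨f, ⟨hfI, fun h ↦ hfJ (mem_insert_of_mem e h)⟩,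
    hI.exchange_isBase_of_indep he.2 hindep⟩

end Matroid

lemma wt_insert (μ : α → ℝ) {s : Set α} {a : α} (hs : s.Finite) (ha : a ∉ s) :
    wt μ (insert a s) = μ a + wt μ s :=
  finsum_mem_insert μ ha hs

lemma IsMaxWeightBase.le_of_exchange {M : Matroid α} {ν : α → ℝ} {I : Set α} {e f : α}
    (h : IsMaxWeightBase M ν I) (hI : I.Finite) (hf : f ∈ I) (he : e ∉ I)
    (hexch : M.IsBase (insert e (I \ {f}))) : ν e ≤ ν f := by
  have hwtI : wt ν I = ν f + wt ν (I \ {f}) := by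
    rw [← wt_insert ν hI.sdiff (by simp : f ∉ I \ {f}), insert_sdiff_singleton,
      insert_eq_of_mem hf]
  have hle := h.2 _ hexch
  rw [wt_insert ν hI.sdiff (fun h ↦ he h.1), hwtI] at hle
  linarith

lemma modCost_of_mem (μ : α → ℝ) {I : Set α} (ε : ℝ) {x : α} (hx : x ∈ I) :
    modCost μ I ε x = μ x + ε := by
  simp [modCost, hx]

lemma modCost_of_notMem (μ : α → ℝ) {I : Set α} (ε : ℝ) {x : α} (hx : x ∉ I) :
    modCost μ I ε x = μ x := by
  simp [modCost, hx]

lemma EpsOptimal.mem_closure_sep_le {M : Matroid α} [M.RankFinite] {μ : α → ℝ} {ε : ℝ}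
    {I : Set α} {e : α} (hopt : EpsOptimal M μ ε I) (he : e ∈ M.E \ I) :
    e ∈ M.closure {x ∈ I | μ e - ε ≤ μ x} := by
  by_contra hcl
  obtain ⟨f, ⟨hfI, hfJ⟩, hexch⟩ := hopt.1.exists_exchange_of_notMem_closure he hcl
  have hle := hopt.le_of_exchange hopt.1.finite hfI he.2 hexch
  rw [modCost_of_notMem μ ε he.2, modCost_of_mem μ ε hfI] at hle
  exact hfJ ⟨hfI, by linarith⟩

theorem approxSubset_blocks_general (M : Matroid α) [M.Finite] (μ : α → ℝ) (ε : ℝ)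
    (A B : Set α) (hB : B ⊆ M.E)
    (I : Set α) (hIA : I ⊆ A)
    (hopt : EpsOptimal (M ↾ B) μ ε I) :
    ∀ e ∈ B \ A,
      M.Blocks {x ∈ I | μ e - ε ≤ μ x} e ∧ M.Blocks {x ∈ A | μ e - ε ≤ μ x} e := by
  intro e he
  have hIB : I ⊆ B := hopt.1.subset_ground
  have hcl := hopt.mem_closure_sep_le ⟨he.1, fun h ↦ he.2 (hIA h)⟩
  rw [restrict_closure_eq _ ((sep_subset _ _).trans hIB) hB] at hcl
  have hsep : {x ∈ I | μ e - ε ≤ μ x} ⊆ {x ∈ A | μ e - ε ≤ μ x} :=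
    fun x hx ↦ ⟨hIA hx.1, hx.2⟩
  exact ⟨blocks_of_mem_closure hcl.1,
    blocks_of_mem_closure (M.closure_subset_closure hsep hcl.1)⟩

/-- If `I ⊆ A` is an independent set witnessing that `A` is an `ε`-approximate subset
of `B`, then every `e ∈ B \ A` is blocked both by `I^{≥ μ e − ε}` and by
`A^{≥ μ e − ε}`. -/
theorem approxSubset_blocks (M : Matroid α) [M.Finite] (μ : α → ℝ)
    (hpos : ∀ e ∈ M.E, 0 < μ e) (ε : ℝ) (hε : 0 < ε)
    (A B : Set α) (hAB : A ⊆ B) (hB : B ⊆ M.E)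
    (I : Set α) (hIA : I ⊆ A) (hIind : (M ↾ A).Indep I)
    (hopt : EpsOptimal (M ↾ B) μ ε I) :
    ∀ e ∈ B \ A,
      M.Blocks {x ∈ I | μ e - ε ≤ μ x} e ∧ M.Blocks {x ∈ A | μ e - ε ≤ μ x} e :=
  approxSubset_blocks_general M μ ε A B hB I hIA hopt
end
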